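/- arXiv:1408.3886 — 2 statements merged into one kernel-verified Lean document; each statement's English description precedes it below -/
import Mathlib

section
/- Let k ≥ 1 and let n_{-k} < n_{-k+1} < ... < n_k be integers with n_{-i} = -n_i for all i, and let Δ(T) = Σ_{i=-k}^{k} (-1)^{k+i} T^{n_i} as a Laurent polynomial over ℤ. Then Δ(T)/(1 - T^{-1}), as a formal Laurent series in T^{-1}, equals Σ_{i=0}^{∞} T^{a_i} for a strictly decreasing sequence of integers (a_i) with a_0 = n_k and a_i = -i for all i ≥ n_k. -/
open Finset
open scoped Classical

/-!
Write `Δ(T) / (1 - T⁻¹) = ∑ₘ cₘ Tᵐ`, so that `cₘ = ∑_{nᵢ ≥ m} (-1)^(k+i)`. As the `nᵢ` increase,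
the indices with `nᵢ ≥ m` form a final segment of `[-k, k]`, so `cₘ` is an alternating sum ending
in `+1`, hence `0` or `1`. The tail sums `F m = ∑_{m' ≥ m} c_{m'} = ∑_{nᵢ ≥ m} ±(nᵢ - m + 1)`
vanish above `n_k`, and since `∑ ± 1 = 1` and, by symmetry, `∑ ± nᵢ = 0`, `F m = 1 - m` for
`m ≤ 1 - n_k`. So `F` climbs from `0` to `∞` in steps of `0` or `1` as `m` decreases; the point
`a_j` where it passes from `j` to `j + 1` enumerates the `m` with `cₘ = 1`, and the known values
of `F` give `a_0 = n_k` and `a_j = -j` for `j ≥ n_k`.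
-/

section Alternating

variable {σ : ℤ → ℤ}

theorem sum_Icc_of_alternating (hσ : ∀ i, σ (i + 1) = -σ i) {a b : ℤ} (hab : a - 1 ≤ b) :
    ∑ i ∈ Icc a b, σ i = if Even (b - a) then σ b else 0 := by
  induction b, hab using Int.leInduction with
  | base => simp
  | succ b hab ih =>
    rw [← insert_Icc_right_eq_Icc_add_one (by omega), sum_insert (by simp), ih, hσ,
      show b + 1 - a = b - a + 1 by ring]
    by_cases h : Even (b - a) <;> simp [h]

theorem sum_Icc_ite_of_alternating (hσ : ∀ i, σ (i + 1) = -σ i) {P : ℤ → Prop} [DecidablePred P]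
    {a b : ℤ} (hP : MonotoneOn P (Set.Icc a b)) (hab : a - 1 ≤ b) :
    (∑ i ∈ Icc a b, if P i then σ i else 0) = 0 ∨ (∑ i ∈ Icc a b, if P i then σ i else 0) = σ b := by
  induction b, hab using Int.leInduction with
  | base => simp
  | succ b hab ih =>
    rw [← insert_Icc_right_eq_Icc_add_one (by omega), sum_insert (by simp)]
    by_cases hb : P (b + 1)
    · rcases ih (hP.mono (Set.Icc_subset_Icc_right (by omega))) with h | h <;>
        simp [hb, h, hσ]
    · rw [if_neg hb, zero_add]
      refine Or.inl (sum_eq_zero fun i hi => if_neg fun hi' => hb ?_)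
      rw [mem_Icc] at hi
      exact hP ⟨hi.1, by omega⟩ ⟨by omega, le_rfl⟩ (by omega) hi'

end Alternating

section LevelCrossings

variable {S F : ℤ → ℤ}

theorem exists_strictAnti_indicator_of_tail (hS : ∀ m, S m = 0 ∨ S m = 1)
    (hF : ∀ m, F m = F (m + 1) + S m) {M : ℤ} (htop : ∀ m, M ≤ m → F m = 0)
    (hbot : ∀ j : ℕ, ∃ z, (j : ℤ) ≤ F z) :
    ∃ a : ℕ → ℤ, StrictAnti a ∧ (∀ j z, a j = z ↔ F z = j + 1 ∧ F (z + 1) = j) ∧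
      ∀ m, S m = if ∃ j, a j = m then 1 else 0 := by
  have hanti : Antitone F :=
    antitone_int_of_succ_le fun m => by rcases hS m with h | h <;> linarith [hF m]
  have hnonneg : ∀ m, 0 ≤ F m := fun m => by
    simpa [htop _ (le_max_right m M)] using hanti (le_max_left m M)
  -- the level `j + 1` is crossed at the largest `z` with `j + 1 ≤ F z`
  have hcross : ∀ j : ℕ, ∃ z, F z = j + 1 ∧ F (z + 1) = j := by
    intro j
    obtain ⟨z, hz, hmax⟩ := Int.exists_greatest_of_bdd (P := fun z => (j : ℤ) + 1 ≤ F z)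
      ⟨M, fun z hz => by by_contra! h; linarith [htop z h.le]⟩
      (by simpa using hbot (j + 1))
    have hnext : ¬ (j : ℤ) + 1 ≤ F (z + 1) := fun h => by linarith [hmax _ h]
    refine ⟨z, ?_, ?_⟩ <;> rcases hS z with h | h <;> linarith [hF z]
  choose a ha using hcross
  have hchar : ∀ j z, a j = z ↔ F z = j + 1 ∧ F (z + 1) = j := by
    refine fun j z => ⟨by rintro rfl; exact ha j, fun ⟨hz, hz1⟩ => ?_⟩
    have h₁ := hanti.reflect_lt (show F (z + 1) < F (a j) by linarith [ha j])
    have h₂ := hanti.reflect_lt (show F (a j + 1) < F z by linarith [ha j])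
    omega
  refine ⟨a, strictAnti_nat_of_succ_lt fun j => ?_, hchar, fun m => ?_⟩
  · have := (ha (j + 1)).1
    push_cast at this
    exact hanti.reflect_lt (by linarith [ha j])
  split_ifs with h
  · obtain ⟨j, rfl⟩ := h
    linarith [hF (a j), ha j]
  · have hm := Int.toNat_of_nonneg (hnonneg (m + 1))
    refine (hS m).resolve_right fun h1 => h ⟨(F (m + 1)).toNat, (hchar _ _).2 ⟨?_, ?_⟩⟩ <;>
      linarith [hF m]

end LevelCrossings

theorem neg_one_pow_natAbs_add_one (z : ℤ) : (-1 : ℤ) ^ (z + 1).natAbs = -(-1) ^ z.natAbs := by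
  rw [← Int.coe_negOnePow ℤ, ← Int.coe_negOnePow ℤ, Int.negOnePow_succ, Units.val_neg,
    Int.cast_neg]

theorem neg_one_pow_natAbs_sub (c i : ℤ) :
    (-1 : ℤ) ^ (c - i).natAbs = (-1) ^ (c + i).natAbs := by
  rw [← Int.coe_negOnePow ℤ, ← Int.coe_negOnePow ℤ,
    (Int.negOnePow_eq_iff (c - i) (c + i)).2 ⟨-i, by ring⟩]

namespace AlexanderQuotient

variable (k : ℕ) (n : ℤ → ℤ)

/-- The coefficient of `T ^ m` in `Δ(T) / (1 - T⁻¹) = ∑ᵢ ± T ^ nᵢ (1 + T⁻¹ + T⁻² + ⋯)`. -/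
noncomputable def coeff (m : ℤ) : ℤ :=
  ∑ i ∈ Icc (-(k : ℤ)) k, if m ≤ n i then (-1 : ℤ) ^ (k + i).natAbs else 0

/-- `∑_{m' ≥ m} coeff k n m'`: the term `± T ^ nᵢ` contributes to the `nᵢ - m + 1` exponents
`m ≤ m' ≤ nᵢ`. -/
noncomputable def tail (m : ℤ) : ℤ :=
  ∑ i ∈ Icc (-(k : ℤ)) k, if m ≤ n i then (-1 : ℤ) ^ (k + i).natAbs * (n i - m + 1) else 0

theorem sign_add_one (i : ℤ) :
    (-1 : ℤ) ^ ((k : ℤ) + (i + 1)).natAbs = -(-1) ^ ((k : ℤ) + i).natAbs := by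
  rw [← add_assoc, neg_one_pow_natAbs_add_one]

theorem sign_self : (-1 : ℤ) ^ ((k : ℤ) + k).natAbs = 1 :=
  Even.neg_one_pow ⟨k, by omega⟩

theorem sum_sign : ∑ i ∈ Icc (-(k : ℤ)) k, (-1 : ℤ) ^ ((k : ℤ) + i).natAbs = 1 := by
  rw [sum_Icc_of_alternating (sign_add_one k) (by omega), if_pos ⟨k, by ring⟩, sign_self]

theorem sum_sign_mul_eq_zero (hsym : ∀ i : ℤ, |i| ≤ (k : ℤ) → n (-i) = -n i) :
    ∑ i ∈ Icc (-(k : ℤ)) k, (-1 : ℤ) ^ ((k : ℤ) + i).natAbs * n i = 0 := by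
  have h := sum_equiv (Equiv.neg ℤ) (s := Icc (-(k : ℤ)) k) (t := Icc (-(k : ℤ)) k)
    (g := fun i => (-1 : ℤ) ^ ((k : ℤ) + i).natAbs * n i) (fun i => by simp; omega)
    (fun i hi => by
      rw [Equiv.neg_apply, hsym i (abs_le.2 (mem_Icc.1 hi)), ← sub_eq_add_neg,
        neg_one_pow_natAbs_sub])
  simp only [mul_neg, sum_neg_distrib] at h
  linarith

theorem tail_eq_tail_add_coeff (m : ℤ) : tail k n m = tail k n (m + 1) + coeff k n m := by
  simp only [tail, coeff, ← sum_add_distrib]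
  refine sum_congr rfl fun i _ => ?_
  by_cases h : m + 1 ≤ n i
  · rw [if_pos (by omega), if_pos h, if_pos (by omega)]
    ring
  · by_cases h' : m = n i
    · simp [h']
    · simp only [if_neg h, if_neg (show ¬m ≤ n i by omega), add_zero]

variable {k n}

theorem coeff_eq_zero_or_one (hmono : StrictMonoOn n (Set.Icc (-(k : ℤ)) k)) (m : ℤ) :
    coeff k n m = 0 ∨ coeff k n m = 1 := by
  simpa [coeff, sign_self] using sum_Icc_ite_of_alternating
    (σ := fun i => (-1 : ℤ) ^ ((k : ℤ) + i).natAbs) (sign_add_one k) (P := fun i => m ≤ n i)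
    (fun i hi j hj hij (h : m ≤ n i) => h.trans (hmono.monotoneOn hi hj hij)) (by omega)

theorem tail_eq_zero (hmono : StrictMonoOn n (Set.Icc (-(k : ℤ)) k)) {m : ℤ} (hm : n k < m) :
    tail k n m = 0 :=
  sum_eq_zero fun i hi => if_neg fun h => by
    have := hmono.monotoneOn (mem_Icc.1 hi) ⟨by omega, le_rfl⟩ (mem_Icc.1 hi).2
    omega

theorem tail_self (hmono : StrictMonoOn n (Set.Icc (-(k : ℤ)) k)) : tail k n (n k) = 1 := by
  rw [tail, sum_eq_single_of_mem (k : ℤ) (by simp), if_pos le_rfl, sign_self]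
  · ring
  · intro i hi hik
    have := hmono (mem_Icc.1 hi) ⟨by omega, le_rfl⟩ (lt_of_le_of_ne (mem_Icc.1 hi).2 hik)
    exact if_neg (by omega)

theorem tail_eq_one_sub (hmono : StrictMonoOn n (Set.Icc (-(k : ℤ)) k))
    (hsym : ∀ i : ℤ, |i| ≤ (k : ℤ) → n (-i) = -n i) {m : ℤ} (hm : m ≤ 1 - n k) :
    tail k n m = 1 - m := by
  have hleft : n (-k) = -n k := hsym k (by simp)
  calc tail k n m
      = ∑ i ∈ Icc (-(k : ℤ)) k, ((-1 : ℤ) ^ ((k : ℤ) + i).natAbs * n i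
          + (1 - m) * (-1 : ℤ) ^ ((k : ℤ) + i).natAbs) := by
        refine sum_congr rfl fun i hi => ?_
        by_cases h : m ≤ n i
        · rw [if_pos h]; ring
        · have := hmono.monotoneOn ⟨le_rfl, by omega⟩ (mem_Icc.1 hi) (mem_Icc.1 hi).1
          rw [if_neg h, show n i = m - 1 by omega]
          ring
    _ = 1 - m := by rw [sum_add_distrib, sum_sign_mul_eq_zero k n hsym, ← mul_sum, sum_sign]; ring

end AlexanderQuotient

open AlexanderQuotient in
theorem stmt_0_general (k : ℕ) (n : ℤ → ℤ)
    (hmono : StrictMonoOn n (Set.Icc (-(k:ℤ)) (k:ℤ)))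
    (hsym : ∀ i : ℤ, |i| ≤ (k:ℤ) → n (-i) = - n i) :
    ∃ a : ℕ → ℤ, StrictAnti a ∧ a 0 = n k ∧
      (∀ i : ℕ, n k ≤ (i:ℤ) → a i = -(i:ℤ)) ∧
      ∀ m : ℤ,
        (∑ i ∈ Finset.Icc (-(k:ℤ)) (k:ℤ), if m ≤ n i then (-1:ℤ)^((k + i).natAbs) else 0)
          = if ∃ j : ℕ, a j = m then 1 else 0 := by
  obtain ⟨a, ha_anti, ha, hcoeff⟩ := exists_strictAnti_indicator_of_tail
    (coeff_eq_zero_or_one hmono) (tail_eq_tail_add_coeff k n)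
    (M := n k + 1) (fun m hm => tail_eq_zero hmono (by omega))
    (fun j => ⟨min (-j) (1 - n k), by rw [tail_eq_one_sub hmono hsym (min_le_right _ _)]; omega⟩)
  refine ⟨a, ha_anti, (ha 0 _).2 ⟨?_, ?_⟩, fun i hi => (ha i _).2 ⟨?_, ?_⟩, hcoeff⟩
  · rw [tail_self hmono]; simp
  · exact tail_eq_zero hmono (by omega)
  · rw [tail_eq_one_sub hmono hsym (by omega)]; ring
  · rw [tail_eq_one_sub hmono hsym (by omega)]; ring

theorem stmt_0 (k : ℕ) (hk : 1 ≤ k) (n : ℤ → ℤ)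
    (hmono : StrictMonoOn n (Set.Icc (-(k:ℤ)) (k:ℤ)))
    (hsym : ∀ i : ℤ, |i| ≤ (k:ℤ) → n (-i) = - n i) :
    ∃ a : ℕ → ℤ, StrictAnti a ∧ a 0 = n k ∧
      (∀ i : ℕ, n k ≤ (i:ℤ) → a i = -(i:ℤ)) ∧
      ∀ m : ℤ,
        (∑ i ∈ Finset.Icc (-(k:ℤ)) (k:ℤ), if m ≤ n i then (-1:ℤ)^((k + i).natAbs) else 0)
          = if ∃ j : ℕ, a j = m then 1 else 0 :=
  stmt_0_general k n hmono hsym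
end

section
/- Let g ≥ 1 and let (a_i)_{i≥0} be a strictly decreasing sequence of integers with a_0 = g and a_i = -i for all i ≥ g. Then the condition 'a_i ≤ g - 2i for all 0 ≤ i ≤ g' is equivalent to the condition on the gap sequence: writing the associated symmetric exponent sequence n_{-k} < ... < n_k (recovered from Σ T^{a_i} = Δ(T)/(1-T^{-1})) with gaps r_i = n_{k+2-2i} - n_{k+1-2i}, one has r_1 = 1 and Σ_{i=2}^j r_i ≤ Σ_{i=k-j+2}^k r_i for all j ≤ k. -/
/-!
The sum `F c` of the coefficients of `Δ(T) / (1 - T⁻¹)` in degrees above `c` counts the terms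
`a i` above `c`, so `a i ≤ c ↔ F c ≤ i` and the condition reads `F (g - 2i) ≤ i`. Since `F`
grows by at most one per unit step down, a parity argument turns this into `2 F c ≤ g - c + 1`
for all `c ∈ [-g, g]`. As `c` decreases, `F` grows with slope one along the intervals
`[n (k - 2j - 1), n (k - 2j)]` and stays constant along the gaps between them, so `2 F c + c` is
largest at the lower ends `n (k - 2j - 1)`. There the inequality compares the total length of the
top `j + 1` intervals with that of the top `j` gaps, which by the symmetry of `Δ` are
`r_1 + ⋯ + r_(j+1)` and `r_k + ⋯ + r_(k-j+1)`.
-/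

open Finset
open scoped Classical

lemma sum_range_two_mul_add_one_neg_one_pow_mul {R : Type*} [CommRing R] (f : ℕ → R) (K : ℕ) :
    ∑ m ∈ range (2 * K + 1), (-1) ^ m * f m
      = ∑ j ∈ range K, (f (2 * j) - f (2 * j + 1)) + f (2 * K) := by
  induction K with
  | zero => simp
  | succ K ih =>
    have hsign : (-1 : R) ^ (2 * K) = 1 := by rw [pow_mul, neg_one_sq, one_pow]
    rw [show 2 * (K + 1) + 1 = 2 * K + 1 + 1 + 1 by ring, sum_range_succ, sum_range_succ, ih,
      sum_range_succ]
    simp only [pow_succ, hsign]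
    ring_nf

lemma sum_Icc_neg_one_pow_natAbs_mul {R : Type*} [CommRing R] (f : ℤ → R) (k : ℕ) :
    ∑ i ∈ Icc (-(k : ℤ)) k, (-1) ^ (k + i).natAbs * f i
      = ∑ j ∈ range k, (f (k - 2 * j) - f (k - 2 * j - 1)) + f (-k) := by
  have hreindex : ∑ i ∈ Icc (-(k : ℤ)) k, (-1) ^ (k + i).natAbs * f i
      = ∑ m ∈ range (2 * k + 1), (-1) ^ m * f (k - m) := by
    refine sum_nbij' (fun i ↦ (k - i).toNat) (fun m ↦ k - m) ?_ ?_ ?_ ?_ ?_ <;>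
      intro x hx <;> simp only [mem_Icc, mem_range] at hx
    · exact mem_range.mpr (by omega)
    · exact mem_Icc.mpr ⟨by omega, by omega⟩
    · omega
    · omega
    · rw [neg_one_pow_eq_pow_mod_two, neg_one_pow_eq_pow_mod_two (k - x).toNat,
        show (k : ℤ) - (k - x).toNat = x by omega,
        show (k + x).natAbs % 2 = (k - x).toNat % 2 by omega]
  rw [hreindex, sum_range_two_mul_add_one_neg_one_pow_mul (fun m ↦ f (k - m))]
  push_cast
  ring_nf

lemma StrictAnti.le_iff_card_filter_Ioc_le {α : Type*} [LinearOrder α] [LocallyFiniteOrder α]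
    {a : ℕ → α} (ha : StrictAnti a) {c top : α} (htop : a 0 ≤ top) (i : ℕ) :
    a i ≤ c ↔ #{m ∈ Ioc c top | ∃ j, a j = m} ≤ i := by
  constructor
  · intro hi
    calc #{m ∈ Ioc c top | ∃ j, a j = m} ≤ #((range i).image a) := by
          refine card_le_card fun m hm ↦ ?_
          obtain ⟨hm, j, rfl⟩ := mem_filter.mp hm
          refine mem_image_of_mem a (mem_range.mpr ?_)
          by_contra! hij
          exact (mem_Ioc.mp hm).1.not_ge ((ha.antitone hij).trans hi)
      _ ≤ i := card_image_le.trans (card_range i).le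
  · intro hcard
    by_contra! hi
    have hsub : (range (i + 1)).image a ⊆ {m ∈ Ioc c top | ∃ j, a j = m} := by
      intro m hm
      obtain ⟨j, hj, rfl⟩ := mem_image.mp hm
      have hji : j ≤ i := Nat.lt_succ_iff.mp (mem_range.mp hj)
      exact mem_filter.mpr ⟨mem_Ioc.mpr ⟨hi.trans_le (ha.antitone hji),
        (ha.antitone (Nat.zero_le j)).trans htop⟩, j, rfl⟩
    have := card_le_card hsub
    rw [card_image_of_injective _ ha.injective, card_range] at this
    omega

lemma eq_card_filter_Ioc_of_sub_one {f : ℤ → ℤ} {p : ℤ → Prop} {top : ℤ}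
    (htop : f top = 0)
    (hstep : ∀ c, f (c - 1) = f c + if p c then 1 else 0) {c : ℤ} (hc : c ≤ top) :
    f c = #{m ∈ Ioc c top | p m} := by
  induction c, hc using Int.leInductionDown with
  | base => simp [htop]
  | pred c hc ih =>
    rw [hstep, ih, Ioc_sub_one_left_eq_Icc, ← Ioc_insert_left hc, filter_insert]
    split_ifs <;> simp [card_insert_of_notMem]

lemma exists_le_and_le_of_le_of_le (f : ℕ → ℤ) {c : ℤ} (h0 : c ≤ f 0) {N : ℕ}
    (hN : f (N + 1) ≤ c) : ∃ j ≤ N, f (j + 1) ≤ c ∧ c ≤ f j := by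
  induction N with
  | zero => exact ⟨0, le_rfl, hN, h0⟩
  | succ N ih =>
    rcases le_or_gt (f (N + 1)) c with h | h
    · obtain ⟨j, hj, hjc⟩ := ih h
      exact ⟨j, by omega, hjc⟩
    · exact ⟨N + 1, le_rfl, hN, h.le⟩

lemma forall_le_sub_two_mul_iff {f : ℤ → ℤ} (hstep : ∀ c, f (c - 1) ≤ f c + 1) (g : ℕ) :
    (∀ i : ℕ, i ≤ g → f (g - 2 * i) ≤ i) ↔
      ∀ c ∈ Icc (-(g : ℤ)) g, 2 * f c ≤ g - c + 1 := by
  constructor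
  · intro h c hc
    rw [mem_Icc] at hc
    obtain ⟨i, hi⟩ | ⟨i, hi⟩ := Int.even_or_odd (g - c)
    · have := h i.toNat (by omega)
      rw [show (g : ℤ) - 2 * (i.toNat : ℤ) = c by omega] at this
      omega
    · have := h i.toNat (by omega)
      have := hstep (c + 1)
      rw [show (g : ℤ) - 2 * (i.toNat : ℤ) = c + 1 by omega] at *
      rw [add_sub_cancel_right] at this
      omega
  · intro h i hi
    have := h (g - 2 * i) (mem_Icc.mpr ⟨by omega, by omega⟩)
    omega

lemma StrictMonoOn.apply_le_apply {α β : Type*} [PartialOrder α] [Preorder β] {f : α → β}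
    {lo hi : α} (hf : StrictMonoOn f (Set.Icc lo hi)) {x y : α} (hx : lo ≤ x) (hxy : x ≤ y)
    (hy : y ≤ hi) : f x ≤ f y :=
  hf.monotoneOn ⟨hx, hxy.trans hy⟩ ⟨hx.trans hxy, hy⟩ hxy

namespace AlexanderExponents

variable {k : ℕ} {n : ℤ → ℤ}

/-- The term `(n i - c)⁺` counts the degrees `m` with `c < m ≤ n i`, so this is the sum of the
coefficients of `Δ(T) / (1 - T⁻¹)` in degrees above `c`, where
`Δ(T) = ∑ (-1)^(k+i) T^(n i)`. -/
noncomputable def upperCoeffSum (k : ℕ) (n : ℤ → ℤ) (c : ℤ) : ℤ :=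
  ∑ i ∈ Icc (-(k : ℤ)) k, (-1) ^ (k + i).natAbs * max (n i - c) 0

lemma upperCoeffSum_eq_of_le_of_le (hmono : StrictMonoOn n (Set.Icc (-(k : ℤ)) k)) {j : ℕ}
    (hj : j < k) {c : ℤ} (hlo : n (k - 2 * j - 2) ≤ c) (hhi : c ≤ n (k - 2 * j)) :
    upperCoeffSum k n c
      = ∑ i ∈ range j, (n (k - 2 * i) - n (k - 2 * i - 1)) + (n (k - 2 * j) - c)
          - max (n (k - 2 * j - 1) - c) 0 := by
  have le : ∀ {x y : ℤ}, -(k : ℤ) ≤ x → x ≤ y → y ≤ k → n x ≤ n y :=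
    hmono.apply_le_apply
  rw [upperCoeffSum, sum_Icc_neg_one_pow_natAbs_mul, ← sum_range_add_sum_Ico _ hj,
    sum_range_succ]
  have hfull : ∀ i ∈ range j, max (n (k - 2 * i) - c) 0 - max (n (k - 2 * i - 1) - c) 0
      = n (k - 2 * i) - n (k - 2 * i - 1) := by
    intro i hi
    have := mem_range.mp hi
    have : c ≤ n (k - 2 * i - 1) := hhi.trans (le (by omega) (by omega) (by omega))
    have : n (k - 2 * i - 1) ≤ n (k - 2 * i) := le (by omega) (by omega) (by omega)
    rw [max_eq_left (by omega), max_eq_left (by omega)]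
    ring
  have hempty : ∀ i ∈ Ico (j + 1) k,
      max (n (k - 2 * i) - c) 0 - max (n (k - 2 * i - 1) - c) 0 = 0 := by
    intro i hi
    have := mem_Ico.mp hi
    have : n (k - 2 * i) ≤ c := (le (by omega) (by omega) (by omega)).trans hlo
    have : n (k - 2 * i - 1) ≤ c := (le (by omega) (by omega) (by omega)).trans hlo
    rw [max_eq_right (by omega), max_eq_right (by omega), sub_zero]
  have hbot : max (n (-k) - c) 0 = 0 :=
    max_eq_right (by linarith [le le_rfl (by omega) (by omega) (y := k - 2 * j - 2)])
  rw [sum_congr rfl hfull, sum_eq_zero hempty, max_eq_left (a := n (k - 2 * j) - c) (by omega),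
    hbot]
  ring

lemma upperCoeffSum_lower_endpoint (hmono : StrictMonoOn n (Set.Icc (-(k : ℤ)) k)) {j : ℕ}
    (hj : j < k) :
    upperCoeffSum k n (n (k - 2 * j - 1))
      = ∑ i ∈ range (j + 1), (n (k - 2 * i) - n (k - 2 * i - 1)) := by
  rw [upperCoeffSum_eq_of_le_of_le hmono hj
    (hmono.apply_le_apply (by omega) (by omega) (by omega))
    (hmono.apply_le_apply (by omega) (by omega) (by omega)), sum_range_succ, sub_self, max_self,
    sub_zero]

lemma upperCoeffSum_top (hmono : StrictMonoOn n (Set.Icc (-(k : ℤ)) k)) (hk : 1 ≤ k) :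
    upperCoeffSum k n (n k) = 0 := by
  have h := upperCoeffSum_eq_of_le_of_le (j := 0) hmono hk (c := n k)
    (by simpa using hmono.apply_le_apply (by omega) (by omega) le_rfl) (by simp)
  have : n (k - 1) ≤ n k := hmono.apply_le_apply (by omega) (by omega) le_rfl
  simpa [max_eq_right (sub_nonpos.mpr this)] using h

lemma two_mul_upperCoeffSum_add_le (hmono : StrictMonoOn n (Set.Icc (-(k : ℤ)) k)) {j : ℕ}
    (hj : j < k) {c : ℤ} (hlo : n (k - 2 * j - 2) ≤ c) (hhi : c ≤ n (k - 2 * j)) :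
    2 * upperCoeffSum k n c + c
      ≤ 2 * upperCoeffSum k n (n (k - 2 * j - 1)) + n (k - 2 * j - 1) := by
  rw [upperCoeffSum_eq_of_le_of_le hmono hj hlo hhi, upperCoeffSum_lower_endpoint hmono hj,
    sum_range_succ]
  linarith [le_max_left (n (k - 2 * j - 1) - c) 0, le_max_right (n (k - 2 * j - 1) - c) 0]

lemma upperCoeffSum_sub_one {a : ℕ → ℤ}
    (hlink : ∀ m : ℤ,
      (∑ i ∈ Icc (-(k : ℤ)) k, if m ≤ n i then (-1 : ℤ) ^ (k + i).natAbs else 0)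
        = if ∃ j, a j = m then 1 else 0) (c : ℤ) :
    upperCoeffSum k n (c - 1) = upperCoeffSum k n c + if ∃ j, a j = c then 1 else 0 := by
  rw [← hlink, upperCoeffSum, upperCoeffSum, ← sum_add_distrib]
  refine sum_congr rfl fun i _ ↦ ?_
  split_ifs with h
  · rw [max_eq_left (by omega), max_eq_left (by omega)]
    ring
  · rw [max_eq_right (by omega), max_eq_right (by omega)]
    ring

lemma le_iff_upperCoeffSum_le (hmono : StrictMonoOn n (Set.Icc (-(k : ℤ)) k)) (hk : 1 ≤ k)
    {a : ℕ → ℤ} (ha : StrictAnti a) (ha0 : a 0 = n k)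
    (hlink : ∀ m : ℤ,
      (∑ i ∈ Icc (-(k : ℤ)) k, if m ≤ n i then (-1 : ℤ) ^ (k + i).natAbs else 0)
        = if ∃ j, a j = m then 1 else 0) {c : ℤ} (hc : c ≤ n k) (i : ℕ) :
    a i ≤ c ↔ upperCoeffSum k n c ≤ i := by
  rw [ha.le_iff_card_filter_Ioc_le ha0.le, eq_card_filter_Ioc_of_sub_one
    (upperCoeffSum_top hmono hk) (upperCoeffSum_sub_one hlink) hc, Nat.cast_le]

lemma forall_two_mul_upperCoeffSum_le_iff (hmono : StrictMonoOn n (Set.Icc (-(k : ℤ)) k))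
    (hsym : ∀ i : ℤ, |i| ≤ k → n (-i) = -n i) {g : ℕ} (hnk : n k = g) (hg : 1 ≤ g)
    (hk : 1 ≤ k) :
    (∀ c ∈ Icc (-(g : ℤ)) g, 2 * upperCoeffSum k n c ≤ g - c + 1) ↔
      n k - n (k - 1) = 1 ∧
        ∀ j < k, 2 * upperCoeffSum k n (n (k - 2 * j - 1)) ≤ g - n (k - 2 * j - 1) + 1 := by
  have hbot : n (-k) = -g := by rw [hsym k (by simp), hnk]
  constructor
  · intro h
    refine ⟨?_, fun j hj ↦ h _ (mem_Icc.mpr ⟨?_, ?_⟩)⟩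
    · have hlt : n (k - 1) < n k :=
        hmono ⟨by omega, by omega⟩ ⟨by omega, le_rfl⟩ (by omega)
      by_contra hne
      have : n (k - 2) ≤ n (k - 1) := hmono.apply_le_apply (by omega) (by omega) (by omega)
      have hwin := upperCoeffSum_eq_of_le_of_le (j := 0) hmono hk (c := g - 2)
        (by simp only [CharP.cast_eq_zero, mul_zero, sub_zero]; omega) (by simp [hnk])
      have := h (g - 2) (mem_Icc.mpr ⟨by omega, by omega⟩)
      simp only [CharP.cast_eq_zero, mul_zero, sub_zero, range_zero, sum_empty, zero_add,
        max_eq_right (show n (k - 1) - (g - 2) ≤ 0 by omega)] at hwin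
      omega
    · rw [← hbot]
      exact hmono.apply_le_apply le_rfl (by omega) (by omega)
    · rw [← hnk]
      exact hmono.apply_le_apply (by omega) (by omega) le_rfl
  · rintro ⟨-, h⟩ c hc
    rw [mem_Icc] at hc
    obtain ⟨j, hj, hlo, hhi⟩ :=
      exists_le_and_le_of_le_of_le (fun j : ℕ ↦ n (k - 2 * j)) (c := c) (N := k - 1)
      (by simpa [hnk] using hc.2)
      (by rw [show (k : ℤ) - 2 * ((k - 1 + 1 : ℕ) : ℤ) = -k by omega, hbot]; exact hc.1)
    have := two_mul_upperCoeffSum_add_le hmono (by omega : j < k)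
      (by convert hlo using 2; push_cast; ring) hhi
    have := h j (by omega)
    omega

/-- The paper's `r_i = n_{k+2-2i} - n_{k+1-2i}`: `gap k n (j + 1)` is the length of the `j`-th
interval `[n (k - 2j - 1), n (k - 2j)]` counted from the top, and by symmetry `gap k n (k - j)` is
the length of the gap `[n (k - 2j - 2), n (k - 2j - 1)]` below it. -/
def gap (k : ℕ) (n : ℤ → ℤ) (i : ℕ) : ℤ := n (k + 2 - 2 * i) - n (k + 1 - 2 * i)

lemma sum_Icc_two_gap (j : ℕ) :
    ∑ i ∈ Icc 2 (j + 1), gap k n i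
      = ∑ i ∈ range (j + 1), (n (k - 2 * i) - n (k - 2 * i - 1)) - (n k - n (k - 1)) := by
  induction j with
  | zero => simp
  | succ j ih =>
    rw [sum_Icc_succ_top (by omega), ih, sum_range_succ _ (j + 1), gap]
    push_cast
    ring_nf

lemma sum_Icc_gap_top (hsym : ∀ i : ℤ, |i| ≤ k → n (-i) = -n i) {j : ℕ} (hj : j ≤ k) :
    ∑ i ∈ Icc (k - j + 1) k, gap k n i
      = ∑ i ∈ range j, (n (k - 2 * i - 1) - n (k - 2 * i - 2)) := by
  induction j with
  | zero => simp
  | succ j ih =>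
    rw [show k - (j + 1) + 1 = k - j by omega, ← insert_Icc_add_one_left_eq_Icc (by omega),
      sum_insert (by simp), ih (by omega), sum_range_succ, add_comm, gap]
    have h1 := hsym (k - 2 * j - 1) (by rw [abs_le]; omega)
    have h2 := hsym (k - 2 * j - 2) (by rw [abs_le]; omega)
    rw [show ((k - j : ℕ) : ℤ) = k - j by omega,
      show (k : ℤ) + 2 - 2 * (k - j) = -(k - 2 * j - 2) by ring,
      show (k : ℤ) + 1 - 2 * (k - j) = -(k - 2 * j - 1) by ring, h1, h2]
    ring

lemma sum_range_add_sum_range_eq_sub (j : ℕ) :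
    ∑ i ∈ range (j + 1), (n (k - 2 * i) - n (k - 2 * i - 1))
      + ∑ i ∈ range j, (n (k - 2 * i - 1) - n (k - 2 * i - 2)) = n k - n (k - 2 * j - 1) := by
  induction j with
  | zero => simp
  | succ j ih =>
    rw [sum_range_succ _ (j + 1),
      sum_range_succ (fun i : ℕ ↦ n (k - 2 * i - 1) - n (k - 2 * i - 2)), Nat.cast_succ,
      show (k : ℤ) - 2 * (j + 1) = k - 2 * j - 2 by ring]
    linear_combination ih

lemma sum_Icc_gap_le_iff (hmono : StrictMonoOn n (Set.Icc (-(k : ℤ)) k))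
    (hsym : ∀ i : ℤ, |i| ≤ k → n (-i) = -n i) {g : ℕ} (hnk : n k = g)
    (hr1 : n k - n (k - 1) = 1) {j : ℕ} (hj : j < k) :
    ∑ i ∈ Icc 2 (j + 1), gap k n i ≤ ∑ i ∈ Icc (k - (j + 1) + 2) k, gap k n i ↔
      2 * upperCoeffSum k n (n (k - 2 * j - 1)) ≤ g - n (k - 2 * j - 1) + 1 := by
  rw [show k - (j + 1) + 2 = k - j + 1 by omega, sum_Icc_two_gap, sum_Icc_gap_top hsym hj.le,
    upperCoeffSum_lower_endpoint hmono hj, hr1, ← hnk]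
  have := sum_range_add_sum_range_eq_sub (k := k) (n := n) j
  constructor <;> intro <;> linarith

lemma forall_two_mul_upperCoeffSum_le_iff_forall_sum_gap_le
    (hmono : StrictMonoOn n (Set.Icc (-(k : ℤ)) k))
    (hsym : ∀ i : ℤ, |i| ≤ k → n (-i) = -n i) {g : ℕ} (hnk : n k = g)
    (hr1 : n k - n (k - 1) = 1) :
    (∀ j < k, 2 * upperCoeffSum k n (n (k - 2 * j - 1)) ≤ g - n (k - 2 * j - 1) + 1) ↔
      ∀ j ≤ k, ∑ i ∈ Icc 2 j, gap k n i ≤ ∑ i ∈ Icc (k - j + 2) k, gap k n i := by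
  constructor
  · rintro h (_ | j) hj
    · simp
    · exact (sum_Icc_gap_le_iff hmono hsym hnk hr1 hj).mpr (h j hj)
  · intro h j hj
    exact (sum_Icc_gap_le_iff hmono hsym hnk hr1 hj).mp (h (j + 1) hj)

end AlexanderExponents

open AlexanderExponents

theorem stmt_4_general (g k : ℕ) (hg : 1 ≤ g) (hk : 1 ≤ k) (n : ℤ → ℤ) (a : ℕ → ℤ)
    (hmono : StrictMonoOn n (Set.Icc (-(k:ℤ)) (k:ℤ)))
    (hsym : ∀ i : ℤ, |i| ≤ (k:ℤ) → n (-i) = - n i)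
    (hnk : n k = g)
    (ha : StrictAnti a) (ha0 : a 0 = g)
    (hlink : ∀ m : ℤ,
      (∑ i ∈ Finset.Icc (-(k:ℤ)) (k:ℤ), if m ≤ n i then (-1:ℤ)^((k + i).natAbs) else 0)
        = if ∃ j : ℕ, a j = m then 1 else 0) :
    (∀ i : ℕ, i ≤ g → a i ≤ (g:ℤ) - 2*(i:ℤ)) ↔
      (n (k:ℤ) - n ((k:ℤ) - 1) = 1 ∧
        ∀ j : ℕ, j ≤ k →
          (∑ i ∈ Finset.Icc 2 j, (n ((k:ℤ)+2-2*(i:ℤ)) - n ((k:ℤ)+1-2*(i:ℤ))))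
            ≤ ∑ i ∈ Finset.Icc (k - j + 2) k, (n ((k:ℤ)+2-2*(i:ℤ)) - n ((k:ℤ)+1-2*(i:ℤ)))) := by
  have hstep (c : ℤ) : upperCoeffSum k n (c - 1) ≤ upperCoeffSum k n c + 1 := by
    rw [upperCoeffSum_sub_one hlink]
    split_ifs <;> omega
  have hcount : (∀ i : ℕ, i ≤ g → a i ≤ (g : ℤ) - 2 * i) ↔
      ∀ i : ℕ, i ≤ g → upperCoeffSum k n (g - 2 * i) ≤ i :=
    forall₂_congr fun i _ ↦
      le_iff_upperCoeffSum_le hmono hk ha (ha0.trans hnk.symm) hlink (by omega) i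
  rw [hcount, forall_le_sub_two_mul_iff hstep,
    forall_two_mul_upperCoeffSum_le_iff hmono hsym hnk hg hk]
  exact and_congr_right fun hr1 ↦
    forall_two_mul_upperCoeffSum_le_iff_forall_sum_gap_le hmono hsym hnk hr1

theorem stmt_4 (g k : ℕ) (hg : 1 ≤ g) (hk : 1 ≤ k) (n : ℤ → ℤ) (a : ℕ → ℤ)
    (hmono : StrictMonoOn n (Set.Icc (-(k:ℤ)) (k:ℤ)))
    (hsym : ∀ i : ℤ, |i| ≤ (k:ℤ) → n (-i) = - n i)
    (hnk : n k = g)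
    (ha : StrictAnti a) (ha0 : a 0 = g)
    (hatail : ∀ i : ℕ, g ≤ i → a i = -(i:ℤ))
    (hlink : ∀ m : ℤ,
      (∑ i ∈ Finset.Icc (-(k:ℤ)) (k:ℤ), if m ≤ n i then (-1:ℤ)^((k + i).natAbs) else 0)
        = if ∃ j : ℕ, a j = m then 1 else 0) :
    (∀ i : ℕ, i ≤ g → a i ≤ (g:ℤ) - 2*(i:ℤ)) ↔
      (n (k:ℤ) - n ((k:ℤ) - 1) = 1 ∧
        ∀ j : ℕ, j ≤ k →
          (∑ i ∈ Finset.Icc 2 j, (n ((k:ℤ)+2-2*(i:ℤ)) - n ((k:ℤ)+1-2*(i:ℤ))))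
            ≤ ∑ i ∈ Finset.Icc (k - j + 2) k, (n ((k:ℤ)+2-2*(i:ℤ)) - n ((k:ℤ)+1-2*(i:ℤ)))) :=
  stmt_4_general g k hg hk n a hmono hsym hnk ha ha0 hlink
end
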